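/- Let d ≥ 3, let C > 0, s ∈ (0,2), r₀ > 0, and let v : (0,∞) → ℝ be continuous with v(r) ≥ -C·r^{-s} for all r ∈ (0, r₀]. Set V(x) = v(‖x‖). Then there exist constants c_d > 0 and λ₀ > 0 such that for every λ ≥ λ₀ and every nonzero twice continuously differentiable u : ℝ^d → ℝ with u and ‖∇u‖ square integrable on ℝ^d and -Δu(x) + V(x)·u(x) = λ·u(x) for all x ≠ 0, no connected component of {x ∈ ℝ^d : u(x) ≠ 0} is contained in the open ball B(0, c_d·λ^{-1/2}). -/

import Mathlib

/-!
Let `Ω ⊆ B(0, R)` be a nodal domain, say with `u > 0` on `Ω`, let `M = max u` over `closure Ω`,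
and fix `σ ∈ (1, 2)` with `σ ≥ s`. The barrier
`w = u + (λM/d) |x|² + (CM / ((2-σ)(d-σ))) |x|^(2-σ)` has no interior maximum: away from the
origin the equation gives `Δw ≥ λM > 0`, and at the origin the cusp of `|x|^(2-σ)` (here
`2 - σ < 1` is used) beats the `C¹` function `u`. So `w` is maximal on `∂Ω`, where `u = 0`,
which yields `1 ≤ λR²/d + C R^(2-σ) / ((2-σ)(d-σ))`. For `R = λ^(-1/2)` the first term is
`1/d ≤ 1/3` and the second tends to `0` as `λ → ∞`.
-/

open MeasureTheory

/-- The Euclidean Laplacian `Δu = Σᵢ ∂²u/∂xᵢ²`. -/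
noncomputable def euclLaplacian {d : ℕ} (u : EuclideanSpace ℝ (Fin d) → ℝ)
    (x : EuclideanSpace ℝ (Fin d)) : ℝ :=
  ∑ i : Fin d, fderiv ℝ (fun y => fderiv ℝ u y (EuclideanSpace.single i 1)) x
      (EuclideanSpace.single i 1)

open Filter Topology

theorem IsLocalMax.deriv_deriv_nonpos {f : ℝ → ℝ} {a : ℝ} (h : IsLocalMax f a)
    (hc : ContinuousAt f a) : deriv (deriv f) a ≤ 0 := by
  by_contra! hpos
  have hmin := isLocalMin_of_deriv_deriv_pos hpos h.deriv_eq_zero hc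
  have hconst : f =ᶠ[𝓝 a] fun _ => f a := by
    filter_upwards [h, hmin] with x hmax hmin using le_antisymm hmax hmin
  have hderiv : deriv f =ᶠ[𝓝 a] fun _ => 0 := by
    filter_upwards [hconst.eventuallyEq_nhds] with x hx
    rw [hx.deriv_eq, deriv_const]
  rw [hderiv.deriv_eq, deriv_const] at hpos
  exact hpos.false

theorem not_isLocalMax_add_abs_rpow {g : ℝ → ℝ} {g' B p : ℝ} (hg : HasDerivAt g g' 0)
    (hB : 0 < B) (hp₀ : 0 < p) (hp₁ : p < 1) :
    ¬IsLocalMax (fun t => g t + B * |t| ^ p) 0 := by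
  intro hmax
  have hslope : Tendsto (slope g 0) (𝓝[>] 0) (𝓝 g') :=
    (hasDerivAt_iff_tendsto_slope.mp hg).mono_left (nhdsGT_le_nhdsNE 0)
  have hbound : Tendsto (fun t : ℝ => -B * t ^ (p - 1)) (𝓝[>] 0) atBot :=
    (tendsto_rpow_neg_nhdsGT_zero (by linarith)).const_mul_atTop_of_neg (by linarith)
  refine not_tendsto_nhds_of_tendsto_atBot (tendsto_atBot_mono' _ ?_ hbound) g' hslope
  filter_upwards [nhdsWithin_le_nhds hmax, self_mem_nhdsWithin] with t ht (htpos : 0 < t)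
  simp only [abs_zero, Real.zero_rpow hp₀.ne', mul_zero, add_zero, abs_of_pos htpos] at ht
  rw [slope_def_field, sub_zero, div_le_iff₀ htpos, mul_assoc,
    ← Real.rpow_add_one htpos.ne', sub_add_cancel]
  linarith

section NormedSpace

variable {E : Type*} [NormedAddCommGroup E] [NormedSpace ℝ E]

theorem hasDerivAt_add_smul (x v : E) (t : ℝ) : HasDerivAt (fun s : ℝ => x + s • v) v t := by
  simpa only [id, one_smul] using ((hasDerivAt_id t).smul_const v).const_add x

theorem HasFDerivAt.comp_add_smul {F : Type*} [NormedAddCommGroup F] [NormedSpace ℝ F]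
    {f : E → F} {f' : E →L[ℝ] F} {x v : E} {t : ℝ} (hf : HasFDerivAt f f' (x + t • v)) :
    HasDerivAt (fun s : ℝ => f (x + s • v)) (f' v) t :=
  hf.comp_hasDerivAt t (hasDerivAt_add_smul x v t)

theorem not_isLocalMax_add_norm_rpow [Nontrivial E] {f : E → ℝ} {x : E}
    (hf : DifferentiableAt ℝ f x) {B p : ℝ} (hB : 0 < B) (hp₀ : 0 < p) (hp₁ : p < 1) :
    ¬IsLocalMax (fun z => f z + B * ‖z - x‖ ^ p) x := by
  obtain ⟨v, hv⟩ := exists_norm_eq E zero_le_one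
  have hx : x + (0 : ℝ) • v = x := by simp
  have hg : HasDerivAt (fun t : ℝ => f (x + t • v)) (fderiv ℝ f x v) 0 :=
    HasFDerivAt.comp_add_smul (by rw [hx]; exact hf.hasFDerivAt)
  intro hmax
  refine not_isLocalMax_add_abs_rpow hg hB hp₀ hp₁ ?_
  have := IsLocalMax.comp_continuous (g := fun t : ℝ => x + t • v) (b := 0) (by rwa [hx])
    (hasDerivAt_add_smul x v 0).continuousAt
  simpa [Function.comp_def, norm_smul, hv] using this

theorem IsLocalMax.fderiv_fderiv_apply_nonpos {w : E → ℝ} {y : E} (h : IsLocalMax w y)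
    (hw : ContDiffAt ℝ 2 w y) (v : E) : fderiv ℝ (fun z => fderiv ℝ w z v) y v ≤ 0 := by
  have hy : y + (0 : ℝ) • v = y := by simp
  have hcont : ContinuousAt (fun t : ℝ => y + t • v) 0 := (hasDerivAt_add_smul y v 0).continuousAt
  have hline : Tendsto (fun t : ℝ => y + t • v) (𝓝 0) (𝓝 y) := by
    simpa only [ContinuousAt, hy] using hcont
  have hdiff : ∀ᶠ t in 𝓝 (0 : ℝ), DifferentiableAt ℝ w (y + t • v) :=
    hline.eventually <| (hw.eventually (by simp)).mono fun z hz => hz.differentiableAt (by norm_num)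
  have hderiv : deriv (fun t : ℝ => w (y + t • v)) =ᶠ[𝓝 0]
      fun t => fderiv ℝ w (y + t • v) v := by
    filter_upwards [hdiff] with t ht
    exact ht.hasFDerivAt.comp_add_smul.deriv
  have hpartial : DifferentiableAt ℝ (fun z => fderiv ℝ w z v) y :=
    ((hw.fderiv_right (m := 1) (by norm_num)).differentiableAt (by norm_num)).clm_apply
      (differentiableAt_const v)
  have hmax : IsLocalMax (fun t : ℝ => w (y + t • v)) 0 :=
    IsLocalMax.comp_continuous (g := fun t : ℝ => y + t • v) (by rwa [hy]) hcont
  calc fderiv ℝ (fun z => fderiv ℝ w z v) y v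
      = deriv (fun t : ℝ => fderiv ℝ w (y + t • v) v) 0 :=
        (HasFDerivAt.comp_add_smul (by rw [hy]; exact hpartial.hasFDerivAt)).deriv.symm
    _ = deriv (deriv fun t : ℝ => w (y + t • v)) 0 := hderiv.deriv_eq.symm
    _ ≤ 0 := hmax.deriv_deriv_nonpos (hw.continuousAt.comp_of_eq hcont hy)

end NormedSpace

theorem hasFDerivAt_norm_rpow_of_ne_zero {E : Type*} [NormedAddCommGroup E]
    [InnerProductSpace ℝ E] {x : E} (hx : x ≠ 0) (p : ℝ) :
    HasFDerivAt (fun z : E => ‖z‖ ^ p) ((p * ‖x‖ ^ (p - 2)) • innerSL ℝ x) x := by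
  have hsq : (fun z : E => ‖z‖ ^ p) = fun z => (‖z‖ ^ 2) ^ (p / 2) := by
    ext z
    rw [← Real.rpow_natCast_mul (norm_nonneg _)]
    ring_nf
  rw [hsq]
  convert ((hasStrictFDerivAt_norm_sq x).rpow_const (p := p / 2) (by simp [hx])).hasFDerivAt
    using 1
  simp_rw [← Real.rpow_natCast_mul (norm_nonneg _), ← Nat.cast_smul_eq_nsmul ℝ, smul_smul]
  ring_nf

theorem IsPreconnected.pos_or_neg {X : Type*} [TopologicalSpace X] {s : Set X}
    (hs : IsPreconnected s) {f : X → ℝ} (hf : ContinuousOn f s) (h0 : s ⊆ {x | f x ≠ 0}) :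
    (∀ x ∈ s, 0 < f x) ∨ (∀ x ∈ s, f x < 0) := by
  by_contra! h
  obtain ⟨⟨a, ha, hfa⟩, b, hb, hfb⟩ := h
  obtain ⟨z, hz, hfz⟩ := hs.intermediate_value ha hb hf ⟨hfa, hfb⟩
  exact h0 hz hfz

theorem IsOpen.frontier_connectedComponentIn_disjoint {X : Type*} [TopologicalSpace X]
    [LocallyConnectedSpace X] {S : Set X} (hS : IsOpen S) (x : X) :
    Disjoint (frontier (connectedComponentIn S x)) S := by
  refine Set.disjoint_left.mpr fun y hy hyS => ?_
  rw [frontier, hS.connectedComponentIn.interior_eq] at hy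
  obtain ⟨z, hzy, hzx⟩ := mem_closure_iff_nhds.mp hy.1 _
    (hS.connectedComponentIn.mem_nhds (mem_connectedComponentIn hyS))
  exact hy.2 <|
    connectedComponentIn_eq hzx ▸ connectedComponentIn_eq hzy ▸ mem_connectedComponentIn hyS

section Laplacian

variable {d : ℕ}

local notation "E" => EuclideanSpace ℝ (Fin d)

theorem euclLaplacian_const_mul (c : ℝ) (f : E → ℝ) (x : E) :
    euclLaplacian (fun z => c * f z) x = c * euclLaplacian f x := by
  simp only [euclLaplacian, Finset.mul_sum]
  congr! 1 with i
  have hf : (fun z => c * f z) = c • f := rfl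
  have hpartial : (fun y => fderiv ℝ (c • f) y (EuclideanSpace.single i 1)) =
      c • fun y => fderiv ℝ f y (EuclideanSpace.single i 1) := by
    rw [fderiv_const_smul_field]
    rfl
  rw [hf, hpartial, fderiv_const_smul_field]
  rfl

theorem euclLaplacian_neg (f : E → ℝ) (x : E) :
    euclLaplacian (fun z => -f z) x = -euclLaplacian f x := by
  simpa using euclLaplacian_const_mul (-1) f x

theorem euclLaplacian_add {f g : E → ℝ} {x : E} (hf : ContDiffAt ℝ 2 f x)
    (hg : ContDiffAt ℝ 2 g x) :
    euclLaplacian (fun z => f z + g z) x = euclLaplacian f x + euclLaplacian g x := by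
  simp only [euclLaplacian, ← Finset.sum_add_distrib]
  congr! 1 with i
  set e : E := EuclideanSpace.single i 1
  have hpartial : ∀ {h : E → ℝ}, ContDiffAt ℝ 2 h x →
      DifferentiableAt ℝ (fun z => fderiv ℝ h z e) x := fun hh =>
    ((hh.fderiv_right (m := 1) (by norm_num)).differentiableAt (by norm_num)).clm_apply
      (differentiableAt_const e)
  have hsum : (fun z => fderiv ℝ (fun z => f z + g z) z e) =ᶠ[𝓝 x]
      fun z => fderiv ℝ f z e + fderiv ℝ g z e := by
    filter_upwards [hf.eventually (by simp), hg.eventually (by simp)] with z hfz hgz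
    rw [fderiv_fun_add (hfz.differentiableAt (by norm_num)) (hgz.differentiableAt (by norm_num))]
    rfl
  rw [hsum.fderiv_eq, fderiv_fun_add (hpartial hf) (hpartial hg)]
  rfl

theorem fderiv_norm_rpow_single {x : E} (hx : x ≠ 0) (p : ℝ) (i : Fin d) :
    fderiv ℝ (fun z : E => ‖z‖ ^ p) x (EuclideanSpace.single i 1) = p * ‖x‖ ^ (p - 2) * x i := by
  simp [(hasFDerivAt_norm_rpow_of_ne_zero hx p).fderiv, EuclideanSpace.inner_single_right]

theorem euclLaplacian_norm_rpow {x : E} (hx : x ≠ 0) (p : ℝ) :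
    euclLaplacian (fun z : E => ‖z‖ ^ p) x = p * (p + d - 2) * ‖x‖ ^ (p - 2) := by
  have hterm : ∀ i : Fin d, fderiv ℝ (fun z => fderiv ℝ (fun z : E => ‖z‖ ^ p) z
      (EuclideanSpace.single i 1)) x (EuclideanSpace.single i 1) =
      p * ((p - 2) * ‖x‖ ^ (p - 2 - 2) * x i ^ 2 + ‖x‖ ^ (p - 2)) := by
    intro i
    have hloc : (fun z => fderiv ℝ (fun z : E => ‖z‖ ^ p) z (EuclideanSpace.single i 1)) =ᶠ[𝓝 x]
        fun z => p * ‖z‖ ^ (p - 2) * z i := by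
      filter_upwards [eventually_ne_nhds hx] with z hz using fderiv_norm_rpow_single hz p i
    have hderiv : HasFDerivAt (fun z : E => p * ‖z‖ ^ (p - 2) * z i) _ x :=
      ((hasFDerivAt_norm_rpow_of_ne_zero hx (p - 2)).const_mul p).fun_mul
        (EuclideanSpace.proj (𝕜 := ℝ) i).hasFDerivAt
    rw [hloc.fderiv_eq, hderiv.fderiv]
    simp only [add_apply, smul_apply, PiLp.proj_apply,
      PiLp.single_eq_same, smul_eq_mul, mul_one, coe_innerSL_apply,
      EuclideanSpace.inner_single_right, Real.ringHom_apply, one_mul]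
    ring
  have hnorm : ‖x‖ ^ (p - 2 - 2) * ‖x‖ ^ 2 = ‖x‖ ^ (p - 2) := by
    rw [← Real.rpow_natCast, ← Real.rpow_add (norm_pos_iff.mpr hx)]
    norm_num
  simp only [euclLaplacian, hterm, ← Finset.mul_sum, Finset.sum_add_distrib, Finset.sum_const,
    Finset.card_univ, Fintype.card_fin, nsmul_eq_mul, ← EuclideanSpace.real_norm_sq_eq]
  linear_combination p * (p - 2) * hnorm

theorem contDiffAt_norm_rpow {x : E} (hx : x ≠ 0) (p : ℝ) :
    ContDiffAt ℝ 2 (fun z : E => ‖z‖ ^ p) x :=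
  (contDiffAt_norm ℝ hx).rpow_const_of_ne (norm_ne_zero_iff.mpr hx)

theorem euclLaplacian_nonpos_of_isLocalMax {w : E → ℝ} {y : E} (h : IsLocalMax w y)
    (hw : ContDiffAt ℝ 2 w y) : euclLaplacian w y ≤ 0 :=
  Finset.sum_nonpos fun _ _ => h.fderiv_fderiv_apply_nonpos hw _

theorem euclLaplacian_barrier {u : E → ℝ} {y : E} (hu : ContDiffAt ℝ 2 u y) (hy : y ≠ 0)
    (A B q : ℝ) :
    euclLaplacian (fun z => u z + A * ‖z‖ ^ (2 : ℝ) + B * ‖z‖ ^ q) y =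
      euclLaplacian u y + 2 * d * A + q * (q + d - 2) * B * ‖y‖ ^ (q - 2) := by
  have h2 := contDiffAt_const (c := A).mul (contDiffAt_norm_rpow hy 2)
  have hq := contDiffAt_const (c := B).mul (contDiffAt_norm_rpow hy q)
  rw [euclLaplacian_add (hu.add h2) hq, euclLaplacian_add hu h2, euclLaplacian_const_mul,
    euclLaplacian_const_mul, euclLaplacian_norm_rpow hy, euclLaplacian_norm_rpow hy, sub_self,
    Real.rpow_zero]
  ring

theorem not_isLocalMax_barrier {σ lam C M : ℝ} (hσ₁ : 1 < σ) (hσ₂ : σ < 2) (hσd : σ < d)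
    (hC : 0 < C) (hlam : 0 < lam) {W u : E → ℝ} (hu : ContDiff ℝ 2 u) {y : E}
    (hW : y ≠ 0 → -C * ‖y‖ ^ (-σ) ≤ W y) (heq : y ≠ 0 → euclLaplacian u y = (W y - lam) * u y)
    (huy : 0 < u y) (huM : u y ≤ M) :
    ¬IsLocalMax (fun z => u z + lam * M / d * ‖z‖ ^ (2 : ℝ) +
      C * M / ((2 - σ) * (d - σ)) * ‖z‖ ^ (2 - σ)) y := by
  have hd : (0 : ℝ) < d := by linarith
  have hK : 0 < (2 - σ) * (d - σ) := mul_pos (by linarith) (by linarith)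
  have hM : 0 < M := huy.trans_le huM
  intro hmax
  rcases eq_or_ne y 0 with rfl | hy
  · have : NeZero d := ⟨by rintro rfl; simp at hd⟩
    have hf : DifferentiableAt ℝ (fun z => u z + lam * M / d * ‖z‖ ^ (2 : ℝ)) 0 :=
      (hu.differentiable (by norm_num) 0).add
        ((hasFDerivAt_norm_rpow (0 : E) one_lt_two).differentiableAt.const_mul _)
    exact not_isLocalMax_add_norm_rpow (B := C * M / ((2 - σ) * (d - σ))) (p := 2 - σ) hf
      (by positivity) (by linarith) (by linarith)
      (by simpa only [sub_zero] using hmax)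
  have hΔ := euclLaplacian_nonpos_of_isLocalMax hmax <|
    (hu.contDiffAt.add (contDiffAt_const.mul (contDiffAt_norm_rpow hy 2))).add
      (contDiffAt_const.mul (contDiffAt_norm_rpow hy _))
  rw [euclLaplacian_barrier hu.contDiffAt hy, heq hy, sub_sub_cancel_left,
    show 2 - σ + d - 2 = d - σ by ring] at hΔ
  have hA : 2 * d * (lam * M / d) = 2 * lam * M := by field_simp
  have hB : (2 - σ) * (d - σ) * (C * M / ((2 - σ) * (d - σ))) = C * M :=
    mul_div_cancel₀ _ hK.ne'
  have hρ : 0 < ‖y‖ ^ (-σ) := Real.rpow_pos_of_pos (norm_pos_iff.mpr hy) _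
  -- `Δw = (W + Cρ) u + (Cρ + λ) (M - u) + λM > 0`, where `ρ = ‖y‖ ^ (-σ)`
  nlinarith [mul_nonneg (by linarith [hW hy] : 0 ≤ W y + C * ‖y‖ ^ (-σ)) huy.le,
    mul_nonneg (by positivity : 0 ≤ C * ‖y‖ ^ (-σ) + lam) (sub_nonneg.mpr huM)]

theorem one_le_of_pos_solution {σ lam C R : ℝ} (hσ₁ : 1 < σ) (hσ₂ : σ < 2) (hσd : σ < d)
    (hC : 0 < C) (hlam : 0 < lam) {W u : E → ℝ} {Ω : Set E} (hΩ : IsOpen Ω) (hne : Ω.Nonempty)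
    (hball : Ω ⊆ Metric.ball 0 R) (hW : ∀ x ∈ Ω, x ≠ 0 → -C * ‖x‖ ^ (-σ) ≤ W x)
    (hu : ContDiff ℝ 2 u) (heq : ∀ x ∈ Ω, x ≠ 0 → euclLaplacian u x = (W x - lam) * u x)
    (hpos : ∀ x ∈ Ω, 0 < u x) (hfront : ∀ x ∈ frontier Ω, u x = 0) :
    1 ≤ lam * R ^ 2 / d + C / ((2 - σ) * (d - σ)) * R ^ (2 - σ) := by
  have hcl : closure Ω ⊆ Metric.closedBall 0 R :=
    (closure_mono hball).trans Metric.closure_ball_subset_closedBall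
  have hcpt : IsCompact (closure Ω) :=
    (isCompact_closedBall 0 R).of_isClosed_subset isClosed_closure hcl
  obtain ⟨p, hp, hpmax⟩ := hcpt.exists_isMaxOn hne.closure hu.continuous.continuousOn
  set M := u p
  obtain ⟨x₀, hx₀⟩ := hne
  have hM : 0 < M := (hpos x₀ hx₀).trans_le (hpmax (subset_closure hx₀))
  set A := lam * M / d
  set B := C * M / ((2 - σ) * (d - σ))
  set w : E → ℝ := fun z => u z + A * ‖z‖ ^ (2 : ℝ) + B * ‖z‖ ^ (2 - σ)
  have hnorm_rpow : ∀ q : ℝ, 0 ≤ q → Continuous fun z : E => ‖z‖ ^ q := fun q hq =>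
    continuous_norm.rpow_const fun _ => .inr hq
  have hwc : Continuous w :=
    (hu.continuous.add (continuous_const.mul (hnorm_rpow 2 zero_le_two))).add
      (continuous_const.mul (hnorm_rpow _ (by linarith)))
  obtain ⟨y, hy, hymax⟩ := hcpt.exists_isMaxOn ⟨x₀, subset_closure hx₀⟩ hwc.continuousOn
  have hyΩ : y ∉ Ω := fun hyΩ =>
    not_isLocalMax_barrier hσ₁ hσ₂ hσd hC hlam hu (hW y hyΩ) (heq y hyΩ) (hpos y hyΩ)
      (hpmax (subset_closure hyΩ)) <|
      (hymax.on_subset subset_closure).isLocalMax (hΩ.mem_nhds hyΩ)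
  have hwp : M ≤ w p := by
    have : 0 ≤ A * ‖p‖ ^ (2 : ℝ) + B * ‖p‖ ^ (2 - σ) := by positivity
    simp only [w]
    linarith
  have hwy : w y ≤ A * R ^ 2 + B * R ^ (2 - σ) := by
    have hu0 : u y = 0 := hfront y ⟨hy, by rwa [hΩ.interior_eq]⟩
    have hyR : ‖y‖ ≤ R := by simpa using hcl hy
    simp only [w, hu0, zero_add, ← Real.rpow_two R]
    gcongr
  have hAB : A * R ^ 2 + B * R ^ (2 - σ) =
      M * (lam * R ^ 2 / d + C / ((2 - σ) * (d - σ)) * R ^ (2 - σ)) := by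
    ring
  have hpy : w p ≤ w y := hymax hp
  refine le_of_mul_le_mul_left ?_ hM
  linarith

theorem one_le_of_connectedComponentIn_subset_ball {σ lam C R : ℝ} (hσ₁ : 1 < σ)
    (hσ₂ : σ < 2) (hσd : σ < d) (hC : 0 < C) (hlam : 0 < lam) {W u : E → ℝ}
    (hW : ∀ x : E, x ≠ 0 → ‖x‖ < R → -C * ‖x‖ ^ (-σ) ≤ W x) (hu : ContDiff ℝ 2 u)
    (heq : ∀ x : E, x ≠ 0 → euclLaplacian u x = (W x - lam) * u x) {x : E} (hx : u x ≠ 0)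
    (hball : connectedComponentIn {y | u y ≠ 0} x ⊆ Metric.ball 0 R) :
    1 ≤ lam * R ^ 2 / d + C / ((2 - σ) * (d - σ)) * R ^ (2 - σ) := by
  set Ω := connectedComponentIn {y | u y ≠ 0} x
  have hS : IsOpen {y | u y ≠ 0} := isOpen_ne_fun hu.continuous continuous_const
  have hΩ : IsOpen Ω := hS.connectedComponentIn
  have hne : Ω.Nonempty := ⟨x, mem_connectedComponentIn hx⟩
  have hW' : ∀ y ∈ Ω, y ≠ 0 → -C * ‖y‖ ^ (-σ) ≤ W y := fun y hy hy0 =>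
    hW y hy0 (by simpa using hball hy)
  have hfront : ∀ y ∈ frontier Ω, u y = 0 := fun y hy => by
    by_contra huy
    exact (hS.frontier_connectedComponentIn_disjoint x).ne_of_mem hy huy rfl
  rcases isPreconnected_connectedComponentIn.pos_or_neg hu.continuous.continuousOn
    (connectedComponentIn_subset _ _) with hpos | hneg
  · exact one_le_of_pos_solution hσ₁ hσ₂ hσd hC hlam hΩ hne hball hW' hu
      (fun y _ hy0 => heq y hy0) hpos hfront
  · refine one_le_of_pos_solution hσ₁ hσ₂ hσd hC hlam hΩ hne hball hW' hu.neg
      (fun y _ hy0 => ?_) (fun y hy => neg_pos.mpr (hneg y hy)) (fun y hy => by simp [hfront y hy])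
    rw [euclLaplacian_neg, heq y hy0]
    ring

end Laplacian

theorem eventually_rpow_neg_half_lt {r ε K q : ℝ} (hr : 0 < r) (hε : 0 < ε) (hq : 0 < q) :
    ∀ᶠ lam in atTop, 0 < lam ∧ lam ^ (-(1 : ℝ) / 2) < r ∧ K * (lam ^ (-(1 : ℝ) / 2)) ^ q < ε := by
  have hR : Tendsto (fun lam : ℝ => lam ^ (-(1 : ℝ) / 2)) atTop (𝓝 0) := by
    simpa [neg_div] using tendsto_rpow_neg_atTop (y := 1 / 2) (by norm_num)
  have hRq : Tendsto (fun lam : ℝ => K * (lam ^ (-(1 : ℝ) / 2)) ^ q) atTop (𝓝 0) := by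
    simpa [Real.zero_rpow hq.ne'] using
      ((Real.continuousAt_rpow_const 0 q (.inr hq.le)).tendsto.comp hR).const_mul K
  exact (eventually_gt_atTop 0).and <|
    (hR.eventually (gt_mem_nhds hr)).and (hRq.eventually (gt_mem_nhds hε))

theorem stmt2_general (d : ℕ) (hd : 3 ≤ d) (C s r₀ : ℝ) (hC : 0 < C)
    (hs : s ∈ Set.Ioo (0 : ℝ) 2) (hr₀ : 0 < r₀)
    (v : ℝ → ℝ)
    (hvlow : ∀ r ∈ Set.Ioc (0 : ℝ) r₀, v r ≥ -C * r ^ (-s)) :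
    ∃ cd > (0 : ℝ), ∃ lam₀ > (0 : ℝ), ∀ lam ≥ lam₀,
      ∀ u : EuclideanSpace ℝ (Fin d) → ℝ, u ≠ 0 → ContDiff ℝ 2 u →
        MemLp u 2 volume → MemLp (fun x => ‖gradient u x‖) 2 volume →
        (∀ x : EuclideanSpace ℝ (Fin d), x ≠ 0 →
          -euclLaplacian u x + v ‖x‖ * u x = lam * u x) →
        ∀ Ω : Set (EuclideanSpace ℝ (Fin d)),
          (∃ x ∈ {y | u y ≠ 0}, Ω = connectedComponentIn {y | u y ≠ 0} x) →
          ¬ Ω ⊆ Metric.ball (0 : EuclideanSpace ℝ (Fin d)) (cd * lam ^ (-(1 : ℝ)/2)) := by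
  have hd' : (3 : ℝ) ≤ d := by exact_mod_cast hd
  -- any `σ ∈ (1, 2)` with `s ≤ σ` works, since `r ^ (-s) ≤ r ^ (-σ)` for `r ≤ 1`
  set σ := max s (3 / 2)
  have hσ₂ : σ < 2 := max_lt hs.2 (by norm_num)
  obtain ⟨a, ha⟩ := eventually_atTop.mp <| eventually_rpow_neg_half_lt (lt_min hr₀ one_pos)
    (by norm_num : (0 : ℝ) < 2 / 3) (K := C / ((2 - σ) * (d - σ))) (by linarith : 0 < 2 - σ)
  refine ⟨1, one_pos, max a 1, by positivity, fun lam hlam u _ hu _ _ hpde Ω hΩ hsub => ?_⟩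
  obtain ⟨hlam, hR, hRσ⟩ := ha lam (le_of_max_le_left hlam)
  obtain ⟨x, hx, rfl⟩ := hΩ
  have hW : ∀ y : EuclideanSpace ℝ (Fin d), y ≠ 0 → ‖y‖ < lam ^ (-(1 : ℝ) / 2) →
      -C * ‖y‖ ^ (-σ) ≤ v ‖y‖ := fun y hy0 hyR => by
    have hy : 0 < ‖y‖ := norm_pos_iff.mpr hy0
    have hpow := Real.rpow_le_rpow_of_exponent_ge hy
      (hyR.trans (hR.trans_le (min_le_right _ _))).le (neg_le_neg (le_max_left s (3 / 2)))
    nlinarith [hvlow ‖y‖ ⟨hy, (hyR.trans (hR.trans_le (min_le_left _ _))).le⟩]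
  have key := one_le_of_connectedComponentIn_subset_ball (lt_max_of_lt_right (by norm_num)) hσ₂
    (by linarith) hC hlam hW hu (fun y hy => by rw [sub_mul]; linarith [hpde y hy]) hx
    (by simpa using hsub)
  have hlamR : lam * (lam ^ (-(1 : ℝ) / 2)) ^ 2 = 1 := by
    rw [← Real.rpow_natCast, ← Real.rpow_mul hlam.le]
    norm_num [Real.rpow_neg_one, hlam.ne']
  have hd3 : 1 / (d : ℝ) ≤ 1 / 3 := by gcongr
  rw [hlamR] at key
  linarith

/-- Proposition 3.5, case `d ≥ 3`: for `λ` large, no nodal domain of an eigenfunction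
with eigenvalue `λ` is contained in the ball `B(0, c_d λ^{-1/2})`. -/
theorem stmt2 (d : ℕ) (hd : 3 ≤ d) (C s r₀ : ℝ) (hC : 0 < C)
    (hs : s ∈ Set.Ioo (0 : ℝ) 2) (hr₀ : 0 < r₀)
    (v : ℝ → ℝ) (hv : ContinuousOn v (Set.Ioi 0))
    (hvlow : ∀ r ∈ Set.Ioc (0 : ℝ) r₀, v r ≥ -C * r ^ (-s)) :
    ∃ cd > (0 : ℝ), ∃ lam₀ > (0 : ℝ), ∀ lam ≥ lam₀,
      ∀ u : EuclideanSpace ℝ (Fin d) → ℝ, u ≠ 0 → ContDiff ℝ 2 u →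
        MemLp u 2 volume → MemLp (fun x => ‖gradient u x‖) 2 volume →
        (∀ x : EuclideanSpace ℝ (Fin d), x ≠ 0 →
          -euclLaplacian u x + v ‖x‖ * u x = lam * u x) →
        ∀ Ω : Set (EuclideanSpace ℝ (Fin d)),
          (∃ x ∈ {y | u y ≠ 0}, Ω = connectedComponentIn {y | u y ≠ 0} x) →
          ¬ Ω ⊆ Metric.ball (0 : EuclideanSpace ℝ (Fin d)) (cd * lam ^ (-(1 : ℝ)/2)) :=
  stmt2_general d hd C s r₀ hC hs hr₀ v hvlow
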